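/- arXiv:2410.02968 — 3 statements merged into one kernel-verified Lean document; each statement's English description precedes it below -/
import Mathlib

section
/- If the makespan ζ(T) = max_t q̄_t − min_t a̲_t of a set of train services satisfies ζ(T) ≤ τ, then for any feasible set of schedules (in the non-periodic sense), its τ-periodic replication is also feasible: for every resource s and every time θ ≥ 0, the number of replicas (t,h) using s at time θ is at most u_s. -/
/-- If the makespan ζ(T) = max q̄ − min a̲ satisfies ζ(T) ≤ τ, then the
τ-periodic replication of any feasible set of schedules is feasible. Trains `ι`,
operation intervals indexed by `J` with owner `tr`, resource label `res`,
half-open occupation interval `[b j, e j) ⊆ [a (tr j), q (tr j))`. -/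
theorem periodic_replication_feasible_of_makespan_le
    {ι J S : Type*} [Fintype ι] [Fintype J]
    (tr : J → ι) (res : J → S) (b e : J → ℝ) (a q : ι → ℝ) (u : S → ℕ) (τ : ℝ)
    (hτ : 0 < τ)
    (hwin : ∀ j, a (tr j) ≤ b j ∧ e j ≤ q (tr j))
    (hmakespan : ∀ t t' : ι, q t - a t' ≤ τ)
    (hfeas : ∀ (s : S) (θ : ℝ),
      Set.ncard {t : ι | ∃ j, tr j = t ∧ res j = s ∧ b j ≤ θ ∧ θ < e j} ≤ u s) :
    ∀ (s : S) (θ : ℝ), 0 ≤ θ →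
      Set.ncard {p : ι × ℕ | ∃ j, tr j = p.1 ∧ res j = s ∧
        b j + (p.2 : ℝ) * τ ≤ θ ∧ θ < e j + (p.2 : ℝ) * τ} ≤ u s := by
  intro s θ _
  set A : Set (ι × ℕ) := {p : ι × ℕ | ∃ j, tr j = p.1 ∧ res j = s ∧
      b j + (p.2 : ℝ) * τ ≤ θ ∧ θ < e j + (p.2 : ℝ) * τ} with hA
  rcases Set.eq_empty_or_nonempty A with hemp | ⟨⟨t0, h0⟩, ht0⟩
  · simp [hA] at hemp ⊢
    rw [hemp]
    simp
  -- No two elements of A can have different replica indices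
  have hnolt : ∀ p p' : ι × ℕ, p ∈ A → p' ∈ A → ¬ p.2 < p'.2 := by
    rintro ⟨t, h⟩ ⟨t', h'⟩ ⟨j, hj, _, hbj, hej⟩ ⟨j', hj', _, hbj', hej'⟩ hlt
    have h1 : (h : ℝ) * τ + τ ≤ (h' : ℝ) * τ := by
      have : (h : ℝ) + 1 ≤ (h' : ℝ) := by exact_mod_cast hlt
      nlinarith
    have h2 : e j ≤ q (tr j) := (hwin j).2
    have h3 : a (tr j') ≤ b j' := (hwin j').1
    have h4 : q (tr j) - a (tr j') ≤ τ := hmakespan (tr j) (tr j')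
    simp only [] at hbj hej hbj' hej'
    linarith
  have hsnd : ∀ p ∈ A, p.2 = h0 := by
    intro p hp
    rcases lt_trichotomy p.2 h0 with h | h | h
    · exact absurd h (hnolt p (t0, h0) hp ht0)
    · exact h
    · exact absurd h (hnolt (t0, h0) p ht0 hp)
  have hinj : Set.InjOn Prod.fst A := by
    intro p hp p' hp' hfst
    have := hsnd p hp
    have := hsnd p' hp'
    exact Prod.ext hfst (by omega)
  set B : Set ι := {t : ι | ∃ j, tr j = t ∧ res j = s ∧
      b j ≤ θ - (h0 : ℝ) * τ ∧ θ - (h0 : ℝ) * τ < e j} with hB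
  have hsub : Prod.fst '' A ⊆ B := by
    rintro t ⟨p, hp, rfl⟩
    have h2 := hsnd p hp
    obtain ⟨j, hj, hres, hbj, hej⟩ := hp
    refine ⟨j, hj, hres, ?_, ?_⟩ <;> rw [h2] at hbj hej <;> linarith
  calc A.ncard = (Prod.fst '' A).ncard := (Set.ncard_image_of_injOn hinj).symm
    _ ≤ B.ncard := Set.ncard_le_ncard hsub (Set.toFinite B)
    _ ≤ u s := hfeas s (θ - (h0 : ℝ) * τ)
end

section
/- Let τ > 0 and let each train's occupation intervals lie in a window of length at most ζ, and set k = ⌈ζ/τ⌉. If the h-th replica of train t and the h'-th replica of train t' have overlapping occupation intervals (for some operations), then |h − h'| ≤ k − 1. -/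
/-- with all occupation intervals inside a common window `[A, A + ζ)`
and `k = ⌈ζ/τ⌉`, if the `h`-th replica of train `t` (intervals indexed by `J`)
and the `h'`-th replica of train `t'` (intervals indexed by `J'`) overlap, then
`|h − h'| ≤ k − 1`. -/
theorem replica_overlap_index_gap
    {J J' : Type*} [Fintype J] [Fintype J']
    (τ ζ A : ℝ) (hτ : 0 < τ) (hζ : 0 < ζ)
    (k : ℕ) (hk : k = ⌈ζ / τ⌉₊)
    (b e : J → ℝ) (b' e' : J' → ℝ)
    (hbe : ∀ j, b j < e j) (hbe' : ∀ j, b' j < e' j)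
    (hwin : ∀ j, A ≤ b j ∧ e j ≤ A + ζ)
    (hwin' : ∀ j, A ≤ b' j ∧ e' j ≤ A + ζ)
    (h h' : ℕ)
    (hoverlap : ∃ (j : J) (j' : J'),
      b j + (h : ℝ) * τ < e' j' + (h' : ℝ) * τ ∧
      b' j' + (h' : ℝ) * τ < e j + (h : ℝ) * τ) :
    |(h : ℤ) - (h' : ℤ)| ≤ (k : ℤ) - 1 := by
  obtain ⟨j, j', h1, h2⟩ := hoverlap
  have hA1 := hwin j
  have hA2 := hwin' j'
  -- (h - h') * τ < ζ and (h' - h) * τ < ζ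
  have key1 : ((h : ℝ) - h') * τ < ζ := by nlinarith [hA1.1, hA2.2]
  have key2 : ((h' : ℝ) - h) * τ < ζ := by nlinarith [hA2.1, hA1.2]
  have habs : |((h : ℝ)) - h'| * τ < ζ := by
    rcases abs_cases ((h : ℝ) - h') with ⟨he, _⟩ | ⟨he, _⟩ <;> rw [he] <;> linarith
  have hlt : |((h : ℝ)) - h'| < ζ / τ := (lt_div_iff₀ hτ).2 habs
  have hle : ζ / τ ≤ (k : ℝ) := by rw [hk]; exact Nat.le_ceil _
  have hltk : |((h : ℤ)) - h'| < (k : ℤ) := by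
    have : |((h : ℝ)) - h'| < (k : ℝ) := lt_of_lt_of_le hlt hle
    exact_mod_cast (by push_cast; exact this : |(((h : ℤ) : ℝ)) - ((h' : ℤ) : ℝ)| < ((k : ℤ) : ℝ))
  omega
end

section
/- A τ-periodic replication of a set of schedules respects the capacity u_s of a resource s at all times θ ≥ 0 if and only if it respects it at all times θ in the single period [ζ_min, ζ_min + τ), where ζ_min = min_t a̲_t; more precisely, for θ ≥ ζ_min + τ, the multiset of replicas using s at θ is in bijection with the multiset of replicas using s at θ − τ. -/
/-- with all occupation intervals inside `[A, A + τ)` (i.e. ζ ≤ τ and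
`A = ζ_min`), the τ-periodic replication respects capacities at all θ ≥ 0 iff it
does so on the single period `[A, A + τ)`; more precisely, for θ ≥ A + τ the set
of replicas using `s` at θ is the image under `(t,h) ↦ (t,h+1)` of the set of
replicas using `s` at `θ − τ`. -/
theorem periodic_capacity_single_period
    {ι J S : Type*} [Fintype ι] [Fintype J]
    (tr : J → ι) (res : J → S) (b e : J → ℝ) (u : S → ℕ) (τ A : ℝ)
    (hτ : 0 < τ) (hA : 0 ≤ A)
    (hwin : ∀ j, A ≤ b j ∧ e j ≤ A + τ) :
    (∀ (s : S) (θ : ℝ), A + τ ≤ θ →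
      {p : ι × ℕ | ∃ j, tr j = p.1 ∧ res j = s ∧
          b j + (p.2 : ℝ) * τ ≤ θ ∧ θ < e j + (p.2 : ℝ) * τ} =
        (fun p : ι × ℕ => (p.1, p.2 + 1)) ''
          {p : ι × ℕ | ∃ j, tr j = p.1 ∧ res j = s ∧
            b j + (p.2 : ℝ) * τ ≤ θ - τ ∧ θ - τ < e j + (p.2 : ℝ) * τ}) ∧
    ((∀ (s : S) (θ : ℝ), 0 ≤ θ →
        Set.ncard {p : ι × ℕ | ∃ j, tr j = p.1 ∧ res j = s ∧
          b j + (p.2 : ℝ) * τ ≤ θ ∧ θ < e j + (p.2 : ℝ) * τ} ≤ u s) ↔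
      (∀ (s : S) (θ : ℝ), A ≤ θ → θ < A + τ →
        Set.ncard {p : ι × ℕ | ∃ j, tr j = p.1 ∧ res j = s ∧
          b j + (p.2 : ℝ) * τ ≤ θ ∧ θ < e j + (p.2 : ℝ) * τ} ≤ u s)) := by
  set U : S → ℝ → Set (ι × ℕ) := fun s θ =>
    {p : ι × ℕ | ∃ j, tr j = p.1 ∧ res j = s ∧
      b j + (p.2 : ℝ) * τ ≤ θ ∧ θ < e j + (p.2 : ℝ) * τ} with hU
  have key : ∀ (s : S) (θ : ℝ), A + τ ≤ θ →
      U s θ = (fun p : ι × ℕ => (p.1, p.2 + 1)) '' U s (θ - τ) := by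
    intro s θ hθ
    ext ⟨t, h⟩
    simp only [hU, Set.mem_setOf_eq, Set.mem_image, Prod.mk.injEq, Prod.exists]
    constructor
    · rintro ⟨j, hj1, hj2, hj3, hj4⟩
      have hh : 1 ≤ h := by
        by_contra hc
        push_neg at hc
        interval_cases h
        have := (hwin j).2
        push_cast at hj4
        linarith
      have hcast : ((h - 1 : ℕ) : ℝ) = (h : ℝ) - 1 := by push_cast [hh]; ring
      refine ⟨t, h - 1, ⟨j, hj1, hj2, ?_, ?_⟩, rfl, by omega⟩
      · rw [hcast]; linarith
      · rw [hcast]; linarith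
    · rintro ⟨t', k, ⟨j, hj1, hj2, hj3, hj4⟩, ht, hk⟩
      subst ht
      have hcast : (h : ℝ) = (k : ℝ) + 1 := by
        rw [← hk]; push_cast; ring
      exact ⟨j, hj1, hj2, by rw [hcast]; linarith, by rw [hcast]; linarith⟩
  have hinj : Function.Injective (fun p : ι × ℕ => (p.1, p.2 + 1)) := by
    rintro ⟨a, x⟩ ⟨c, y⟩ hxy
    simp only [Prod.mk.injEq] at hxy
    exact Prod.ext hxy.1 (by omega)
  refine ⟨key, ?_, ?_⟩
  · intro hall s θ hθ₁ _
    exact hall s θ (le_trans hA hθ₁)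
  · intro hper
    have main : ∀ (n : ℕ) (s : S) (θ : ℝ), 0 ≤ θ → θ < A + (n + 1) * τ →
        Set.ncard (U s θ) ≤ u s := by
      intro n
      induction n with
      | zero =>
        intro s θ hθ hθ'
        rcases lt_or_ge θ A with hc | hc
        · have : U s θ = ∅ := by
            ext ⟨t, h⟩
            simp only [hU, Set.mem_setOf_eq, Set.mem_empty_iff_false, iff_false]
            rintro ⟨j, _, _, hj3, _⟩
            have := (hwin j).1
            have : (0 : ℝ) ≤ (h : ℝ) * τ := by positivity
            linarith
          simp [this]
        · exact hper s θ hc (by push_cast at hθ'; linarith)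
      | succ n ih =>
        intro s θ hθ hθ'
        rcases lt_or_ge θ (A + (n + 1) * τ) with hc | hc
        · exact ih s θ hθ hc
        · have hθτ : A + τ ≤ θ := by nlinarith [Nat.cast_nonneg (α := ℝ) n]
          rw [key s θ hθτ, Set.ncard_image_of_injective _ hinj]
          exact ih s (θ - τ) (by linarith) (by push_cast at hθ' ⊢; linarith)
    intro s θ hθ
    obtain ⟨n, hn⟩ := exists_nat_gt ((θ - A) / τ)
    have : θ < A + (n + 1) * τ := by
      have := (div_lt_iff₀ hτ).mp hn
      nlinarith
    exact main n s θ hθ this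
end
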